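/- (Lemma 3.3, directional sublinearity of χ_0) Let d = 1 and suppose ℙ satisfies Assumption 1.1. Then for each ê ∈ {−1, +1}, ℙ-almost surely, lim_{n→∞} n^{−1} χ_0(ω, nê) = 0, where χ_0 = Π − Φ_0. -/

import Mathlib

open MeasureTheory ProbabilityTheory Filter Set
open scoped NNReal ENNReal

noncomputable section

/-- The space of time-dependent, symmetric, positive conductances on the
nearest-neighbour edges of `ℤ` (conductances vanish on non-edges). -/
abbrev Env : Type :=
  {ω : ℝ → ℤ → ℤ → ℝ //
    ∀ t x y, ((x - y).natAbs = 1 → 0 < ω t x y) ∧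
      ((x - y).natAbs ≠ 1 → ω t x y = 0) ∧ ω t x y = ω t y x}

/-- Time-space shift `τ_{s,z}`. -/
def shift (s : ℝ) (z : ℤ) (ω : Env) : Env :=
  ⟨fun t x y => ω.1 (t + s) (x + z) (y + z), fun t x y => by
    have h : x + z - (y + z) = x - y := by ring
    simpa [h] using ω.2 (t + s) (x + z) (y + z)⟩

/-- Assumption 1.1: `P` is a probability measure, stationary and ergodic with respect to
time-space shifts, with first positive and negative moments of the conductances finite. -/
structure Assumption (P : Measure Env) : Prop where
  isProb : IsProbabilityMeasure P
  stationary : ∀ (s : ℝ) (z : ℤ), MeasurePreserving (shift s z) P P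
  ergodic : ∀ A : Set Env, MeasurableSet A →
    (∀ (s : ℝ) (z : ℤ), shift s z ⁻¹' A = A) → P A = 0 ∨ P A = 1
  momPlus : ∀ (t : ℝ) (x y : ℤ), (x - y).natAbs = 1 →
    Integrable (fun ω : Env => ω.1 t x y) P
  momMinus : ∀ (t : ℝ) (x y : ℤ), (x - y).natAbs = 1 →
    Integrable (fun ω : Env => (ω.1 t x y)⁻¹) P

/-- The time-dependent generator `(L_t^ω f)(x) = Σ_{y∼x} ω_t(x,y)(f(y)-f(x))`. -/
def gen (ω : Env) (t : ℝ) (f : ℤ → ℝ) (x : ℤ) : ℝ :=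
  ω.1 t x (x + 1) * (f (x + 1) - f x) + ω.1 t x (x - 1) * (f (x - 1) - f x)


/-- A measurable random field satisfying the (space) cocycle property. -/
def Cocycle1 (P : Measure Env) (Ψ : Env → ℤ → ℝ) : Prop :=
  (∀ x, Measurable fun ω => Ψ ω x) ∧
    ∀ᵐ ω ∂P, ∀ x y : ℤ, Ψ (shift 0 x ω) (y - x) = Ψ ω y - Ψ ω x

/-- The squared `L²_cov`-norm `E[Σ_{x∼0} ω_0(0,x) |Ψ(ω,x)|²]`. -/
def covNormSq1 (P : Measure Env) (Ψ : Env → ℤ → ℝ) : ℝ≥0∞ :=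
  ∫⁻ ω, ENNReal.ofReal (ω.1 0 0 1 * (Ψ ω 1) ^ 2 + ω.1 0 0 (-1) * (Ψ ω (-1)) ^ 2) ∂P

/-- Membership in `L²_cov`. -/
def MemL2cov1 (P : Measure Env) (Ψ : Env → ℤ → ℝ) : Prop :=
  Cocycle1 P Ψ ∧ covNormSq1 P Ψ < ⊤

/-- Membership in `L²_pot`, the closure in `L²_cov` of the gradients
`Dφ(ω,x) = φ(τ_{0,x}ω) - φ(ω)` of bounded measurable functions `φ`. -/
def MemL2pot1 (P : Measure Env) (Ψ : Env → ℤ → ℝ) : Prop :=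
  MemL2cov1 P Ψ ∧
    ∀ ε : ℝ, 0 < ε → ∃ φ : Env → ℝ, Measurable φ ∧ (∃ C : ℝ, ∀ ω, |φ ω| ≤ C) ∧
      covNormSq1 P (fun ω x => Ψ ω x - (φ (shift 0 x ω) - φ ω)) < ENNReal.ofReal ε

/-- The harmonic coordinate
`Φ(ω,t,x) = Φ₀(τ_{t,0}ω, x) - ∫_0^t (L_s^ω Φ₀(τ_{s,0}ω, ·))(0) ds`. -/
def PhiF1 (Φ₀ : Env → ℤ → ℝ) (ω : Env) (t : ℝ) (x : ℤ) : ℝ :=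
  Φ₀ (shift t 0 ω) x - ∫ s in (0 : ℝ)..t, gen ω s (fun y => Φ₀ (shift s 0 ω) y) 0

/-- `χ₀ = Π - Φ₀`. -/
def chi01 (Φ₀ : Env → ℤ → ℝ) (ω : Env) (x : ℤ) : ℝ := (x : ℝ) - Φ₀ ω x

/-- The corrector `χ(ω,t,x) = Π(ω,x) - Φ(ω,t,x)`. -/
def chi1 (Φ₀ : Env → ℤ → ℝ) (ω : Env) (t : ℝ) (x : ℤ) : ℝ := (x : ℝ) - PhiF1 Φ₀ ω t x

/-- `Φ₀` has the properties of Theorem 2.3 (in `d = 1`): `Φ₀ ∈ L²_cov`,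
`χ₀ = Π - Φ₀ ∈ L²_pot`, and for `P`-a.e. `ω` the function `Φ` built from `Φ₀` satisfies
`Φ(ω,0,0) = 0` and is, for every `x`, differentiable at a.e. `t` with
`∂_t Φ(ω,t,x) = -(L_t^ω Φ(ω,t,·))(x)`. -/
def IsHarmonicCoord1 (P : Measure Env) (Φ₀ : Env → ℤ → ℝ) : Prop :=
  MemL2cov1 P Φ₀ ∧ MemL2pot1 P (chi01 Φ₀) ∧
    ∀ᵐ ω ∂P, PhiF1 Φ₀ ω 0 0 = 0 ∧ ∀ x : ℤ, ∀ᵐ t : ℝ ∂volume,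
      HasDerivAt (fun s => PhiF1 Φ₀ ω s x)
        (-(gen ω t (fun y => PhiF1 Φ₀ ω t y) x)) t

/-!
Along the direction `e`, the cocycle property makes `χ₀(ω, n e)` the Birkhoff sum of
`χ₀(·, e)` under the measure-preserving shift `τ_{0,e}`. Since `χ₀ ∈ L²_pot` and
`E[ω_0(0,e)⁻¹] < ∞`, the pointwise bound `|g| ≤ ε / w + w g² / ε` (weight `w = ω_0(0,e)`)
turns the approximation of `χ₀` by gradients of bounded functions into an `L¹`-approximation
of `χ₀(·, e)` by coboundaries `φ ∘ τ_{0,e} - φ` with `φ` bounded. The Birkhoff sums of such a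
coboundary telescope to a bounded quantity, while the maximal ergodic inequality bounds,
outside a set of small measure, the Birkhoff sums of the `L¹`-small remainder by `λ n` for
all `n` simultaneously.
-/

section MaximalErgodic

variable {α : Type*} {T : α → α} {f : α → ℝ}

def maxBirkhoffSum (T : α → α) (f : α → ℝ) : ℕ → α → ℝ
  | 0 => fun _ => 0
  | N + 1 => fun x => max (maxBirkhoffSum T f N x) (birkhoffSum T f (N + 1) x)

lemma birkhoffSum_le_maxBirkhoffSum {n N : ℕ} (h : n ≤ N) (x : α) :
    birkhoffSum T f n x ≤ maxBirkhoffSum T f N x := by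
  induction N with
  | zero => simp [Nat.le_zero.1 h, maxBirkhoffSum]
  | succ N ih =>
    rcases h.lt_or_eq with h | rfl
    · exact (ih (Nat.lt_succ_iff.1 h)).trans (le_max_left _ _)
    · exact le_max_right _ _

lemma maxBirkhoffSum_nonneg (N : ℕ) (x : α) : 0 ≤ maxBirkhoffSum T f N x := by
  simpa using birkhoffSum_le_maxBirkhoffSum (T := T) (f := f) N.zero_le x

lemma monotone_maxBirkhoffSum (x : α) : Monotone fun N => maxBirkhoffSum T f N x :=
  monotone_nat_of_le_succ fun _ => le_max_left _ _

lemma exists_maxBirkhoffSum_eq (N : ℕ) (x : α) :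
    ∃ n ≤ N, maxBirkhoffSum T f N x = birkhoffSum T f n x := by
  induction N with
  | zero => exact ⟨0, le_rfl, by simp [maxBirkhoffSum]⟩
  | succ N ih =>
    obtain ⟨n, hn, heq⟩ := ih
    rcases le_total (maxBirkhoffSum T f N x) (birkhoffSum T f (N + 1) x) with h | h
    · exact ⟨N + 1, le_rfl, max_eq_right h⟩
    · exact ⟨n, hn.trans N.le_succ, (max_eq_left h).trans heq⟩

lemma maxBirkhoffSum_le_add_maxBirkhoffSum {N : ℕ} {x : α} (hx : 0 < maxBirkhoffSum T f N x) :
    maxBirkhoffSum T f N x ≤ f x + maxBirkhoffSum T f N (T x) := by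
  obtain ⟨n, hn, heq⟩ := exists_maxBirkhoffSum_eq (T := T) (f := f) N x
  cases n with
  | zero => simp [heq] at hx
  | succ m =>
    rw [heq, birkhoffSum_succ']
    grw [birkhoffSum_le_maxBirkhoffSum (by omega : m ≤ N)]

variable [MeasurableSpace α] {μ : Measure α}

lemma measurable_birkhoffSum (hT : Measurable T) (hf : Measurable f) (n : ℕ) :
    Measurable (birkhoffSum T f n) :=
  Finset.measurable_sum _ fun k _ => hf.comp (hT.iterate k)

lemma measurable_maxBirkhoffSum (hT : Measurable T) (hf : Measurable f) (N : ℕ) :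
    Measurable (maxBirkhoffSum T f N) := by
  induction N with
  | zero => exact measurable_const
  | succ N ih => exact ih.max (measurable_birkhoffSum hT hf (N + 1))

lemma integrable_birkhoffSum (hT : MeasurePreserving T μ μ) (hf : Integrable f μ) (n : ℕ) :
    Integrable (birkhoffSum T f n) μ :=
  integrable_finsetSum _ fun k _ => (hT.iterate k).integrable_comp_of_integrable hf

lemma integrable_maxBirkhoffSum (hT : MeasurePreserving T μ μ) (hf : Integrable f μ) (N : ℕ) :
    Integrable (maxBirkhoffSum T f N) μ := by
  induction N with
  | zero => exact integrable_zero α ℝ μ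
  | succ N ih => exact ih.sup (integrable_birkhoffSum hT hf (N + 1))

/-- Garsia's maximal ergodic lemma. -/
theorem setIntegral_maxBirkhoffSum_pos_nonneg (hT : MeasurePreserving T μ μ)
    (hfm : Measurable f) (hf : Integrable f μ) (N : ℕ) :
    0 ≤ ∫ x in {x | 0 < maxBirkhoffSum T f N x}, f x ∂μ := by
  set M := maxBirkhoffSum T f N
  set E := {x | 0 < M x}
  have hMm : Measurable M := measurable_maxBirkhoffSum hT.measurable hfm N
  have hM : Integrable M μ := integrable_maxBirkhoffSum hT hf N
  have hMT : Integrable (fun x => M (T x)) μ := hT.integrable_comp_of_integrable hM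
  have h_le : ∫ x in E, (M x - M (T x)) ∂μ ≤ ∫ x in E, f x ∂μ :=
    setIntegral_mono_on (hM.sub hMT).integrableOn hf.integrableOn
      (measurableSet_lt measurable_const hMm) fun x hx => by
        linarith [maxBirkhoffSum_le_add_maxBirkhoffSum hx]
  have hME : ∫ x in E, M x ∂μ = ∫ x, M x ∂μ :=
    setIntegral_eq_integral_of_forall_compl_eq_zero fun x hx =>
      le_antisymm (not_lt.1 hx) (maxBirkhoffSum_nonneg N x)
  have hMTE : ∫ x in E, M (T x) ∂μ ≤ ∫ x, M (T x) ∂μ :=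
    setIntegral_le_integral hMT (.of_forall fun x => maxBirkhoffSum_nonneg N (T x))
  have hMT_eq : ∫ x, M (T x) ∂μ = ∫ x, M x ∂μ := by
    rw [← integral_map hT.aemeasurable hMm.aestronglyMeasurable, hT.map_eq]
  rw [integral_sub hM.integrableOn hMT.integrableOn] at h_le
  linarith

/-- The maximal ergodic inequality. -/
theorem measure_exists_mul_lt_birkhoffSum_le [IsFiniteMeasure μ] (hT : MeasurePreserving T μ μ)
    {h : α → ℝ} (hm : Measurable h) (hi : Integrable h μ) (h0 : ∀ x, 0 ≤ h x) {c : ℝ}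
    (hc : 0 < c) :
    μ {x | ∃ n : ℕ, c * n < birkhoffSum T h n x} ≤ ENNReal.ofReal ((∫ x, h x ∂μ) / c) := by
  set g : α → ℝ := fun x => h x - c
  have hg : ∀ n x, birkhoffSum T g n x = birkhoffSum T h n x - c * n := fun n x => by
    simp [g, birkhoffSum, Finset.sum_sub_distrib, mul_comm]
  have hunion : {x | ∃ n : ℕ, c * n < birkhoffSum T h n x} =
      ⋃ N, {x | 0 < maxBirkhoffSum T g N x} := by
    ext x
    simp only [Set.mem_ofPred_eq, Set.mem_iUnion]
    constructor
    · rintro ⟨n, hn⟩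
      exact ⟨n, (by rw [hg]; linarith : 0 < birkhoffSum T g n x).trans_le
        (birkhoffSum_le_maxBirkhoffSum le_rfl x)⟩
    · rintro ⟨N, hN⟩
      obtain ⟨n, -, heq⟩ := exists_maxBirkhoffSum_eq (T := T) (f := g) N x
      rw [heq, hg] at hN
      exact ⟨n, by linarith⟩
  have hmono : Monotone fun N => {x | 0 < maxBirkhoffSum T g N x} :=
    fun N N' hNN' x hx => hx.trans_le (monotone_maxBirkhoffSum x hNN')
  rw [hunion, hmono.measure_iUnion]
  refine iSup_le fun N => ?_
  set E := {x | 0 < maxBirkhoffSum T g N x}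
  have hgarsia : 0 ≤ ∫ x in E, (h x - c) ∂μ :=
    setIntegral_maxBirkhoffSum_pos_nonneg hT (hm.sub measurable_const)
      (hi.sub (integrable_const c)) N
  rw [integral_sub hi.integrableOn (integrable_const c).integrableOn, setIntegral_const,
    smul_eq_mul] at hgarsia
  have hE : μ.real E ≤ (∫ x, h x ∂μ) / c := by
    rw [le_div_iff₀ hc]
    linarith [setIntegral_le_integral (s := E) hi (.of_forall h0)]
  rw [← ofReal_measureReal]
  exact ENNReal.ofReal_le_ofReal hE

end MaximalErgodic

section Sublinearity

variable {α : Type*} {T : α → α} {f : α → ℝ}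

lemma birkhoffSum_coboundary {M : Type*} [AddCommGroup M] (T : α → α) (φ : α → M) (n : ℕ)
    (x : α) : birkhoffSum T (fun y => φ (T y) - φ y) n x = φ (T^[n] x) - φ x := by
  simp only [birkhoffSum, ← Function.iterate_succ_apply' T]
  exact Finset.sum_range_sub (fun k => φ (T^[k] x)) n

lemma eventually_abs_birkhoffAverage_le {φ : α → ℝ} {C c : ℝ} (hc : 0 < c)
    (hφ : ∀ y, |φ y| ≤ C) {x : α}
    (hx : ∀ n : ℕ, birkhoffSum T (fun y => |f y - (φ (T y) - φ y)|) n x ≤ c * n) :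
    ∀ᶠ n : ℕ in atTop, |birkhoffAverage ℝ T f n x| ≤ 2 * c := by
  obtain ⟨N, hN⟩ := exists_nat_ge (2 * C / c)
  filter_upwards [eventually_ge_atTop (max N 1)] with n hn
  have hn0 : (0 : ℝ) < n := by exact_mod_cast (le_max_right N 1).trans hn
  have hCn : 2 * C ≤ c * n := by
    rw [div_le_iff₀ hc] at hN
    nlinarith [(Nat.cast_le (α := ℝ)).2 ((le_max_left N 1).trans hn)]
  have hsplit : birkhoffSum T f n x =
      birkhoffSum T (fun y => f y - (φ (T y) - φ y)) n x + (φ (T^[n] x) - φ x) := by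
    rw [← birkhoffSum_coboundary, ← birkhoffSum_add']
    congr 1
    ext y
    simp only [Pi.add_apply]
    ring
  have hsum : |birkhoffSum T f n x| ≤ 2 * c * n :=
    calc |birkhoffSum T f n x|
        ≤ birkhoffSum T (fun y => |f y - (φ (T y) - φ y)|) n x + (|φ (T^[n] x)| + |φ x|) := by
          rw [hsplit]
          grw [abs_add_le, abs_sub, birkhoffSum, Finset.abs_sum_le_sum_abs]
          rfl
      _ ≤ c * n + 2 * C := by linarith [hx n, hφ (T^[n] x), hφ x]
      _ ≤ 2 * c * n := by linarith
  rw [birkhoffAverage, smul_eq_mul, abs_mul, abs_inv, Nat.abs_cast, inv_mul_le_iff₀ hn0]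
  linarith

variable [MeasurableSpace α] {μ : Measure α}

/-- `happrox` says that `f` is an `L¹`-limit of coboundaries `φ ∘ T - φ` of bounded `φ`. -/
theorem measure_frequently_lt_abs_birkhoffAverage_eq_zero [IsFiniteMeasure μ]
    (hT : MeasurePreserving T μ μ) (hf : Measurable f)
    (happrox : ∀ ε > 0, ∃ φ : α → ℝ, Measurable φ ∧ (∃ C, ∀ x, |φ x| ≤ C) ∧
      ∫⁻ x, ‖f x - (φ (T x) - φ x)‖ₑ ∂μ ≤ ENNReal.ofReal ε)
    {c : ℝ} (hc : 0 < c) :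
    μ {x | ∃ᶠ n in atTop, 2 * c < |birkhoffAverage ℝ T f n x|} = 0 := by
  refine nonpos_iff_eq_zero.1 (ENNReal.le_of_forall_pos_le_add fun δ hδ _ => ?_)
  obtain ⟨φ, hφm, ⟨C, hC⟩, hL1⟩ := happrox (c * δ) (by positivity)
  set g : α → ℝ := fun y => f y - (φ (T y) - φ y)
  have hgm : Measurable g := hf.sub ((hφm.comp hT.measurable).sub hφm)
  have hgi : Integrable g μ := ⟨hgm.aestronglyMeasurable, hL1.trans_lt ENNReal.ofReal_lt_top⟩
  have hgL1 : ∫ x, |g x| ∂μ ≤ c * δ := by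
    have hnorm := ofReal_integral_norm_eq_lintegral_enorm hgi
    simp only [Real.norm_eq_abs] at hnorm
    rwa [← ENNReal.ofReal_le_ofReal_iff (by positivity), hnorm]
  have hsub : {x | ∃ᶠ n in atTop, 2 * c < |birkhoffAverage ℝ T f n x|} ⊆
      {x | ∃ n : ℕ, c * n < birkhoffSum T (fun y => |g y|) n x} := by
    intro x hx
    by_contra hx'
    simp only [Set.mem_ofPred_eq, not_exists, not_lt] at hx'
    exact hx (eventually_abs_birkhoffAverage_le hc hC hx' |>.mono fun n hn => hn.not_gt)
  calc μ {x | ∃ᶠ n in atTop, 2 * c < |birkhoffAverage ℝ T f n x|}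
      ≤ ENNReal.ofReal ((∫ x, |g x| ∂μ) / c) :=
        (measure_mono hsub).trans <|
          measure_exists_mul_lt_birkhoffSum_le hT hgm.abs hgi.abs (fun _ => abs_nonneg _) hc
    _ ≤ 0 + δ := by
      rw [zero_add, ← ENNReal.ofReal_coe_nnreal]
      gcongr
      rwa [div_le_iff₀' hc]

theorem ae_tendsto_birkhoffAverage_zero [IsFiniteMeasure μ]
    (hT : MeasurePreserving T μ μ) (hf : Measurable f)
    (happrox : ∀ ε > 0, ∃ φ : α → ℝ, Measurable φ ∧ (∃ C, ∀ x, |φ x| ≤ C) ∧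
      ∫⁻ x, ‖f x - (φ (T x) - φ x)‖ₑ ∂μ ≤ ENNReal.ofReal ε) :
    ∀ᵐ x ∂μ, Tendsto (birkhoffAverage ℝ T f · x) atTop (nhds 0) := by
  have hbad : ∀ᵐ x ∂μ, ∀ j : ℕ,
      ∀ᶠ n in atTop, |birkhoffAverage ℝ T f n x| ≤ 2 * (1 / (j + 1)) := by
    refine ae_all_iff.2 fun j => ae_iff.2 ?_
    simpa only [Filter.not_eventually, not_le] using
      measure_frequently_lt_abs_birkhoffAverage_eq_zero hT hf happrox (c := 1 / (j + 1))
        (by positivity)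
  filter_upwards [hbad] with x hx
  refine Metric.tendsto_nhds.2 fun ε hε => ?_
  obtain ⟨j, hj⟩ := exists_nat_one_div_lt (half_pos hε)
  filter_upwards [hx j] with n hn
  rw [Real.dist_0_eq_abs]
  linarith

end Sublinearity

lemma lintegral_enorm_le_of_lintegral_mul_sq_le {α : Type*} [MeasurableSpace α] {μ : Measure α}
    {w g : α → ℝ} (hwm : Measurable w) (hw : ∀ x, 0 < w x) {ε : ℝ} (hε : 0 < ε)
    (hg : ∫⁻ x, ENNReal.ofReal (w x * g x ^ 2) ∂μ ≤ ENNReal.ofReal (ε ^ 2)) :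
    ∫⁻ x, ‖g x‖ₑ ∂μ ≤ ENNReal.ofReal ε * (∫⁻ x, ENNReal.ofReal (w x)⁻¹ ∂μ + 1) := by
  have hpt : ∀ x, ‖g x‖ₑ ≤ ENNReal.ofReal ε * ENNReal.ofReal (w x)⁻¹
      + ENNReal.ofReal ε⁻¹ * ENNReal.ofReal (w x * g x ^ 2) := by
    intro x
    have hwx := hw x
    rw [← ofReal_norm, ← ENNReal.ofReal_mul hε.le, ← ENNReal.ofReal_mul (by positivity),
      ← ENNReal.ofReal_add (by positivity) (by positivity)]
    refine ENNReal.ofReal_le_ofReal ?_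
    rw [Real.norm_eq_abs, ← div_eq_mul_inv, mul_comm ε⁻¹, ← div_eq_mul_inv,
      div_add_div _ _ hwx.ne' hε.ne', le_div_iff₀ (by positivity), ← sq_abs (g x)]
    nlinarith [sq_nonneg (ε - w x * |g x|),
      mul_nonneg (mul_nonneg hε.le hwx.le) (abs_nonneg (g x))]
  calc ∫⁻ x, ‖g x‖ₑ ∂μ
      ≤ ∫⁻ x, (ENNReal.ofReal ε * ENNReal.ofReal (w x)⁻¹
          + ENNReal.ofReal ε⁻¹ * ENNReal.ofReal (w x * g x ^ 2)) ∂μ := lintegral_mono hpt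
    _ = ENNReal.ofReal ε * ∫⁻ x, ENNReal.ofReal (w x)⁻¹ ∂μ
          + ENNReal.ofReal ε⁻¹ * ∫⁻ x, ENNReal.ofReal (w x * g x ^ 2) ∂μ := by
      rw [lintegral_add_left (by fun_prop),
        lintegral_const_mul' _ _ ENNReal.ofReal_ne_top,
        lintegral_const_mul' _ _ ENNReal.ofReal_ne_top]
    _ ≤ ENNReal.ofReal ε * ∫⁻ x, ENNReal.ofReal (w x)⁻¹ ∂μ
          + ENNReal.ofReal ε⁻¹ * ENNReal.ofReal (ε ^ 2) := by gcongr
    _ = ENNReal.ofReal ε * (∫⁻ x, ENNReal.ofReal (w x)⁻¹ ∂μ + 1) := by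
      rw [← ENNReal.ofReal_mul (by positivity), show ε⁻¹ * ε ^ 2 = ε by field_simp, mul_add,
        mul_one]

lemma shift_zero_zero (ω : Env) : shift 0 0 ω = ω := by
  ext t x y
  simp [shift]

lemma shift_shift (s t : ℝ) (a b : ℤ) (ω : Env) :
    shift s a (shift t b ω) = shift (s + t) (a + b) ω := by
  ext u x y
  simp [shift, add_assoc]

lemma iterate_shift (s : ℝ) (z : ℤ) (n : ℕ) (ω : Env) :
    (shift s z)^[n] ω = shift (n * s) (n * z) ω := by
  induction n with
  | zero => simp [shift_zero_zero]
  | succ n ih =>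
    rw [Function.iterate_succ_apply', ih, shift_shift]
    congr 1 <;> push_cast <;> ring

lemma measurable_conductance (t : ℝ) (x y : ℤ) : Measurable fun ω : Env => ω.1 t x y :=
  ((measurable_subtype_coe.eval (a := t)).eval (a := x)).eval (a := y)

lemma cocycle_mul_eq_birkhoffSum {Ψ : Env → ℤ → ℝ} {ω : Env}
    (hΨ : ∀ x y : ℤ, Ψ (shift 0 x ω) (y - x) = Ψ ω y - Ψ ω x) (e : ℤ) (n : ℕ) :
    Ψ ω (n * e) = birkhoffSum (shift 0 e) (fun ω => Ψ ω e) n ω := by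
  induction n with
  | zero => simpa [shift_zero_zero] using hΨ 0 0
  | succ n ih =>
    have hstep := hΨ (n * e) ((n + 1) * e)
    rw [show ((n : ℤ) + 1) * e - n * e = e by ring] at hstep
    rw [birkhoffSum_succ, ← ih, iterate_shift, mul_zero]
    push_cast
    linarith

lemma lintegral_mul_sq_le_covNormSq1 (P : Measure Env) {e : ℤ} (he : e = 1 ∨ e = -1)
    (Ψ : Env → ℤ → ℝ) :
    ∫⁻ ω, ENNReal.ofReal (ω.1 0 0 e * Ψ ω e ^ 2) ∂P ≤ covNormSq1 P Ψ := by
  refine lintegral_mono fun ω => ENNReal.ofReal_le_ofReal ?_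
  have h₁ := mul_nonneg ((ω.2 0 0 1).1 (by decide)).le (sq_nonneg (Ψ ω 1))
  have h₂ := mul_nonneg ((ω.2 0 0 (-1)).1 (by decide)).le (sq_nonneg (Ψ ω (-1)))
  rcases he with rfl | rfl <;> linarith

lemma exists_bounded_lintegral_enorm_sub_coboundary_le {P : Measure Env}
    {Ψ : Env → ℤ → ℝ} (hΨ : MemL2pot1 P Ψ) {e : ℤ} (he : e = 1 ∨ e = -1)
    (hinv : Integrable (fun ω : Env => (ω.1 0 0 e)⁻¹) P) :
    ∀ ε > 0, ∃ φ : Env → ℝ, Measurable φ ∧ (∃ C, ∀ ω, |φ ω| ≤ C) ∧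
      ∫⁻ ω, ‖Ψ ω e - (φ (shift 0 e ω) - φ ω)‖ₑ ∂P ≤ ENNReal.ofReal ε := by
  intro ε hε
  set A := ∫⁻ ω, ENNReal.ofReal (ω.1 0 0 e)⁻¹ ∂P
  have hA : A ≠ ⊤ := hinv.lintegral_lt_top.ne
  set ε₀ := ε / (A.toReal + 1)
  have hε₀ : 0 < ε₀ := by positivity
  obtain ⟨φ, hφm, hφb, hcov⟩ := hΨ.2 (ε₀ ^ 2) (by positivity)
  refine ⟨φ, hφm, hφb, ?_⟩
  have hw : ∀ ω : Env, 0 < ω.1 0 0 e := fun ω =>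
    (ω.2 0 0 e).1 (by rcases he with rfl | rfl <;> decide)
  calc ∫⁻ ω, ‖Ψ ω e - (φ (shift 0 e ω) - φ ω)‖ₑ ∂P
      ≤ ENNReal.ofReal ε₀ * (A + 1) :=
        lintegral_enorm_le_of_lintegral_mul_sq_le (measurable_conductance 0 0 e) hw hε₀
          ((lintegral_mul_sq_le_covNormSq1 P he _).trans hcov.le)
    _ = ENNReal.ofReal ε := by
      rw [← ENNReal.ofReal_toReal hA, ← ENNReal.ofReal_one,
        ← ENNReal.ofReal_add ENNReal.toReal_nonneg zero_le_one, ← ENNReal.ofReal_mul hε₀.le]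
      exact congrArg ENNReal.ofReal (div_mul_cancel₀ ε (by positivity))

/-- Lemma 3.3: directional sublinearity of `χ₀` in `d = 1`: for each `ê ∈ {-1,+1}`,
`P`-almost surely `χ₀(ω, nê)/n → 0`. -/
theorem chi0_directional_sublinearity
    (P : Measure Env) (hP : Assumption P)
    (Φ₀ : Env → ℤ → ℝ) (hΦ : IsHarmonicCoord1 P Φ₀) :
    ∀ e : ℤ, e = 1 ∨ e = -1 →
      ∀ᵐ ω ∂P, Tendsto (fun n : ℕ => (n : ℝ)⁻¹ * chi01 Φ₀ ω (n * e))
        atTop (nhds 0) := by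
  intro e he
  have := hP.isProb
  obtain ⟨⟨⟨hχm, hcocycle⟩, -⟩, -⟩ := hΦ.2.1
  have hinv : Integrable (fun ω : Env => (ω.1 0 0 e)⁻¹) P :=
    hP.momMinus 0 0 e (by rcases he with rfl | rfl <;> decide)
  have hlim := ae_tendsto_birkhoffAverage_zero (hP.stationary 0 e) (hχm e)
    (exists_bounded_lintegral_enorm_sub_coboundary_le hΦ.2.1 he hinv)
  filter_upwards [hcocycle, hlim] with ω hω hω'
  simpa only [birkhoffAverage, smul_eq_mul, ← cocycle_mul_eq_birkhoffSum hω] using hω'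

end
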